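/- arXiv:1709.04276 — 2 statements merged into one kernel-verified Lean document; each statement's English description precedes it below -/
import Mathlib

section
/- Let 1 ≤ p ≤ ∞ and α ≥ 0. There exists a constant C > 0 such that for every measurable u : ℂ → ℂ with ‖⟨z⟩^α u‖_{L^p(ℂ)} < ∞ (where ⟨z⟩ = (1+|z|²)^{1/2}), the integral Πu(z) = (1/π) e^{−|z|²/2} ∫_ℂ e^{\overline{w} z − |w|²/2} u(w) dL(w) converges absolutely for every z ∈ ℂ, and ‖⟨z⟩^α Πu‖_{L^p(ℂ)} ≤ C ‖⟨z⟩^α u‖_{L^p(ℂ)}. -/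
/-!
Since `|K(z, w)| = π⁻¹ e^{-|z - w|²/2}`, Peetre's inequality `⟨z⟩^α ≤ 2^{α/2} ⟨z - w⟩^α ⟨w⟩^α`
dominates `⟨z⟩^α |Πu(z)|` pointwise by the convolution of `⟨·⟩^α |u|` with the kernel
`M(x) = 2^{α/2} π⁻¹ ⟨x⟩^α e^{-|x|²/2}`, which is integrable and bounded. Young's inequality for
an `L¹` kernel (Hölder's inequality against the measure `M(z - w) dw`) then gives the `L^p` bound
with `C = ‖M‖₁`, and boundedness of `M` makes the convolution finite at every point, which is the
absolute convergence of the defining integral.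
-/

open MeasureTheory

/-- The lowest Landau level projector, given by the kernel
`K(z,w) = (1/π) e^{-|z|²/2 - |w|²/2 + w̄ z}`. -/
noncomputable def LLLProj (u : ℂ → ℂ) (z : ℂ) : ℂ :=
  (Real.pi : ℂ)⁻¹ * Complex.exp (-(‖z‖ : ℂ) ^ 2 / 2) *
    ∫ w : ℂ, Complex.exp ((starRingEnd ℂ) w * z - (‖w‖ : ℂ) ^ 2 / 2) * u w

open scoped ENNReal Nat

namespace MeasureTheory

variable {G : Type*} [MeasurableSpace G] {μ : Measure G} {f g : G → ℝ≥0∞}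

theorem lconvolution_le_mul_lintegral [Add G] [Neg G] (hf : AEMeasurable f μ) {B : ℝ≥0∞}
    (hgB : ∀ x, g x ≤ B) (x : G) : (f ⋆ₗ[μ] g) x ≤ B * ∫⁻ y, f y ∂μ := by
  calc (f ⋆ₗ[μ] g) x ≤ ∫⁻ y, f y * B ∂μ := lintegral_mono fun y => by gcongr; exact hgB _
    _ = B * ∫⁻ y, f y ∂μ := by rw [lintegral_mul_const'' _ hf, mul_comm]

theorem lintegral_lconvolution [AddGroup G] [MeasurableAdd₂ G] [MeasurableNeg G]
    [μ.IsAddLeftInvariant] [SFinite μ] (hf : AEMeasurable f μ) (hg : Measurable g) :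
    ∫⁻ x, (f ⋆ₗ[μ] g) x ∂μ = (∫⁻ x, f x ∂μ) * ∫⁻ x, g x ∂μ := by
  have inner (y : G) : ∫⁻ x, f y * g (-y + x) ∂μ = f y * ∫⁻ x, g x ∂μ := by
    rw [lintegral_const_mul _ (by fun_prop), lintegral_add_left_eq_self]
  simp only [lconvolution_def]
  rw [lintegral_lintegral_swap (hf.comp_snd.mul (by fun_prop))]
  simp_rw [inner]
  exact lintegral_mul_const'' _ hf

variable [AddCommGroup G] [MeasurableAdd₂ G] [MeasurableNeg G] [μ.IsAddLeftInvariant]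
  [μ.IsNegInvariant]

theorem lintegral_neg_add_eq_self (g : G → ℝ≥0∞) (x : G) :
    ∫⁻ y, g (-y + x) ∂μ = ∫⁻ y, g y ∂μ := by
  simp_rw [neg_add_eq_sub]
  exact lintegral_sub_left_eq_self g x

theorem lconvolution_le_eLpNormEssSup_mul (hg : Measurable g) (x : G) :
    (f ⋆ₗ[μ] g) x ≤ eLpNormEssSup f μ * ∫⁻ y, g y ∂μ := by
  calc (f ⋆ₗ[μ] g) x ≤ ∫⁻ y, eLpNormEssSup f μ * g (-y + x) ∂μ :=
        lintegral_mono_ae <| (enorm_ae_le_eLpNormEssSup f μ).mono fun y hy => by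
          gcongr; simpa using hy
    _ = _ := by rw [lintegral_const_mul _ (by fun_prop), lintegral_neg_add_eq_self]

/-- Hölder's inequality against the measure `g (-y + x) dμ(y)`, of total mass `∫⁻ g`. -/
theorem lconvolution_rpow_le (hf : AEMeasurable f μ) (hg : Measurable g) {r : ℝ} (hr : 1 ≤ r)
    (x : G) : (f ⋆ₗ[μ] g) x ^ r ≤ (∫⁻ y, g y ∂μ) ^ (r - 1) * ((f · ^ r) ⋆ₗ[μ] g) x := by
  rcases hr.eq_or_lt with rfl | hr
  · simp
  set s := r.conjExponent
  have hrs : s.HolderConjugate r := (Real.HolderConjugate.conjExponent hr).symm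
  have hsplit (y : G) :
      f y * g (-y + x) = g (-y + x) ^ (1 / s) * (f y * g (-y + x) ^ (1 / r)) := by
    rw [mul_left_comm, ← ENNReal.rpow_add_of_nonneg _ _ (by simp [hrs.nonneg]) (by positivity),
      one_div, one_div, hrs.inv_add_inv_eq_one, ENNReal.rpow_one]
  have holder : (f ⋆ₗ[μ] g) x ≤ (∫⁻ y, g y ∂μ) ^ (1 / s) * ((f · ^ r) ⋆ₗ[μ] g) x ^ (1 / r) := by
    calc (f ⋆ₗ[μ] g) x
        = ∫⁻ y, g (-y + x) ^ (1 / s) * (f y * g (-y + x) ^ (1 / r)) ∂μ := lintegral_congr hsplit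
      _ ≤ (∫⁻ y, (g (-y + x) ^ (1 / s)) ^ s ∂μ) ^ (1 / s) *
            (∫⁻ y, (f y * g (-y + x) ^ (1 / r)) ^ r ∂μ) ^ (1 / r) :=
        ENNReal.lintegral_mul_le_Lp_mul_Lq μ hrs (by fun_prop) (by fun_prop)
      _ = (∫⁻ y, g y ∂μ) ^ (1 / s) * ((f · ^ r) ⋆ₗ[μ] g) x ^ (1 / r) := by
        simp_rw [ENNReal.mul_rpow_of_nonneg _ _ hrs.symm.nonneg, ← ENNReal.rpow_mul,
          one_div_mul_cancel hrs.ne_zero, one_div_mul_cancel hrs.symm.ne_zero, ENNReal.rpow_one,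
          lintegral_neg_add_eq_self, lconvolution_def]
  have hexp : 1 / s * r = r - 1 := by
    rw [one_div, eq_sub_of_add_eq hrs.inv_add_inv_eq_one]
    field_simp [hrs.symm.ne_zero]
  calc (f ⋆ₗ[μ] g) x ^ r
      ≤ ((∫⁻ y, g y ∂μ) ^ (1 / s) * ((f · ^ r) ⋆ₗ[μ] g) x ^ (1 / r)) ^ r :=
        ENNReal.rpow_le_rpow holder hrs.symm.nonneg
    _ = (∫⁻ y, g y ∂μ) ^ (r - 1) * ((f · ^ r) ⋆ₗ[μ] g) x := by
        rw [ENNReal.mul_rpow_of_nonneg _ _ hrs.symm.nonneg, ← ENNReal.rpow_mul, ← ENNReal.rpow_mul,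
          one_div_mul_cancel hrs.symm.ne_zero, ENNReal.rpow_one, hexp]

theorem eLpNorm_lconvolution_le [SFinite μ] (hf : AEMeasurable f μ) (hg : Measurable g)
    {p : ℝ≥0∞} (hp : 1 ≤ p) : eLpNorm (f ⋆ₗ[μ] g) p μ ≤ (∫⁻ y, g y ∂μ) * eLpNorm f p μ := by
  rcases eq_or_ne p ∞ with rfl | hp_top
  · simp only [eLpNorm_exponent_top]
    refine eLpNormEssSup_le_of_ae_enorm_bound (ae_of_all _ fun x => ?_)
    rw [enorm_eq_self, mul_comm]
    exact lconvolution_le_eLpNormEssSup_mul hg x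
  have hp0 : p ≠ 0 := (zero_lt_one.trans_le hp).ne'
  set r := p.toReal
  have hr : 1 ≤ r := by simpa using ENNReal.toReal_mono hp_top hp
  set A := ∫⁻ y, g y ∂μ
  have hpow : ∫⁻ x, (f ⋆ₗ[μ] g) x ^ r ∂μ ≤ A ^ r * ∫⁻ y, f y ^ r ∂μ :=
    calc ∫⁻ x, (f ⋆ₗ[μ] g) x ^ r ∂μ ≤ ∫⁻ x, A ^ (r - 1) * ((f · ^ r) ⋆ₗ[μ] g) x ∂μ :=
          lintegral_mono fun x => lconvolution_rpow_le hf hg hr x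
      _ = A ^ (r - 1) * ((∫⁻ y, f y ^ r ∂μ) * A) := by
          rw [lintegral_const_mul'' _ (aemeasurable_lconvolution (by fun_prop) hg.aemeasurable),
            lintegral_lconvolution (by fun_prop) hg]
      _ = A ^ (r - 1 + 1) * ∫⁻ y, f y ^ r ∂μ := by
          rw [ENNReal.rpow_add_of_nonneg _ _ (by linarith) zero_le_one, ENNReal.rpow_one]; ring
      _ = A ^ r * ∫⁻ y, f y ^ r ∂μ := by rw [sub_add_cancel]
  have hr0 : 0 < r := zero_lt_one.trans_le hr
  simp only [eLpNorm_eq_lintegral_rpow_enorm_toReal hp0 hp_top, enorm_eq_self]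
  calc (∫⁻ x, (f ⋆ₗ[μ] g) x ^ r ∂μ) ^ (1 / r) ≤ (A ^ r * ∫⁻ y, f y ^ r ∂μ) ^ (1 / r) :=
        ENNReal.rpow_le_rpow hpow (by positivity)
    _ = A * (∫⁻ y, f y ^ r ∂μ) ^ (1 / r) := by
        rw [ENNReal.mul_rpow_of_nonneg _ _ (by positivity), ← ENNReal.rpow_mul,
          mul_one_div_cancel hr0.ne', ENNReal.rpow_one]

theorem lconvolution_lt_top [SFinite μ] (hf : AEMeasurable f μ) (hg : Measurable g)
    (hg_int : ∫⁻ y, g y ∂μ ≠ ∞) {B : ℝ≥0∞} (hB : B ≠ ∞) (hgB : ∀ x, g x ≤ B)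
    {p : ℝ≥0∞} (hp : 1 ≤ p) (hfp : eLpNorm f p μ ≠ ∞) (x : G) : (f ⋆ₗ[μ] g) x < ∞ := by
  rcases eq_or_ne p ∞ with rfl | hp_top
  · rw [eLpNorm_exponent_top] at hfp
    exact (lconvolution_le_eLpNormEssSup_mul hg x).trans_lt
      (ENNReal.mul_lt_top hfp.lt_top hg_int.lt_top)
  have hp0 : p ≠ 0 := (zero_lt_one.trans_le hp).ne'
  have hr : 1 ≤ p.toReal := by simpa using ENNReal.toReal_mono hp_top hp
  have hfr : ∫⁻ y, f y ^ p.toReal ∂μ < ∞ := by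
    simpa using lintegral_rpow_enorm_lt_top_of_eLpNorm_lt_top hp0 hp_top hfp.lt_top
  rw [← ENNReal.rpow_lt_top_iff_of_pos (zero_lt_one.trans_le hr)]
  calc (f ⋆ₗ[μ] g) x ^ p.toReal ≤ (∫⁻ y, g y ∂μ) ^ (p.toReal - 1) * ((f · ^ p.toReal) ⋆ₗ[μ] g) x :=
        lconvolution_rpow_le hf hg hr x
    _ ≤ (∫⁻ y, g y ∂μ) ^ (p.toReal - 1) * (B * ∫⁻ y, f y ^ p.toReal ∂μ) := by
        gcongr; exact lconvolution_le_mul_lintegral (by fun_prop) hgB x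
    _ < ∞ := by
        apply ENNReal.mul_lt_top (ENNReal.rpow_lt_top_of_nonneg (by linarith) hg_int)
        exact ENNReal.mul_lt_top hB.lt_top hfr

end MeasureTheory

theorem one_add_norm_add_sq_rpow_le {E : Type*} [SeminormedAddGroup E] {a : ℝ} (ha : 0 ≤ a)
    (x y : E) : (1 + ‖x + y‖ ^ 2) ^ a ≤ 2 ^ a * (1 + ‖x‖ ^ 2) ^ a * (1 + ‖y‖ ^ 2) ^ a := by
  have h : 1 + ‖x + y‖ ^ 2 ≤ 2 * (1 + ‖x‖ ^ 2) * (1 + ‖y‖ ^ 2) := by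
    nlinarith [norm_add_le x y, norm_nonneg (x + y), sq_nonneg (‖x‖ - ‖y‖), sq_nonneg (‖x‖ * ‖y‖)]
  rw [← Real.mul_rpow (by positivity) (by positivity),
    ← Real.mul_rpow (by positivity) (by positivity)]
  exact Real.rpow_le_rpow (by positivity) h ha

theorem exists_one_add_rpow_le_mul_exp {a ε : ℝ} (hε : 0 < ε) :
    ∃ C, ∀ t : ℝ, 0 ≤ t → (1 + t) ^ a ≤ C * Real.exp (ε * t) := by
  set n := ⌈a⌉₊
  refine ⟨n ! / ε ^ n * Real.exp ε, fun t ht => ?_⟩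
  have hexp := Real.pow_div_factorial_le_exp (x := ε * (1 + t)) (by positivity) n
  calc (1 + t) ^ a ≤ (1 + t) ^ (n : ℝ) :=
        Real.rpow_le_rpow_of_exponent_le (by linarith) (Nat.le_ceil a)
    _ = (ε * (1 + t)) ^ n / n ! * (n ! / ε ^ n) := by
        rw [Real.rpow_natCast, mul_pow]; field_simp
    _ ≤ Real.exp (ε * (1 + t)) * (n ! / ε ^ n) := by gcongr
    _ = n ! / ε ^ n * Real.exp ε * Real.exp (ε * t) := by
        rw [mul_add, mul_one, Real.exp_add]; ring

theorem integrable_one_add_norm_sq_rpow_mul_exp {V : Type*} [NormedAddCommGroup V]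
    [InnerProductSpace ℝ V] [FiniteDimensional ℝ V] [MeasurableSpace V] [BorelSpace V]
    {a b : ℝ} (hb : 0 < b) :
    Integrable fun x : V => (1 + ‖x‖ ^ 2) ^ a * Real.exp (-b * ‖x‖ ^ 2) := by
  obtain ⟨C, hC⟩ := exists_one_add_rpow_le_mul_exp (half_pos hb)
  have gaussian : Integrable fun x : V => Real.exp (-(b / 2) * ‖x‖ ^ 2) := by
    convert (GaussianFourier.integrable_cexp_neg_mul_sq_norm_add (V := V) (b := ((b / 2 : ℝ) : ℂ))
      (by simpa using hb) 0 0).norm using 2 with x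
    rw [Complex.norm_exp]
    norm_cast
    simp
  refine (gaussian.const_mul C).mono' (by fun_prop) (ae_of_all _ fun x => ?_)
  rw [Real.norm_of_nonneg (by positivity)]
  calc (1 + ‖x‖ ^ 2) ^ a * Real.exp (-b * ‖x‖ ^ 2)
      ≤ C * Real.exp (b / 2 * ‖x‖ ^ 2) * Real.exp (-b * ‖x‖ ^ 2) := by
        gcongr; exact hC _ (sq_nonneg _)
    _ = C * Real.exp (-(b / 2) * ‖x‖ ^ 2) := by
        rw [mul_assoc, ← Real.exp_add]; ring_nf

namespace LowestLandauLevel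

open Complex ComplexConjugate

/-- `weighted a u = ⟨·⟩^{2a} u`: the weight `⟨z⟩^α` of the theorem is `weighted (α / 2)`. -/
noncomputable def weighted (a : ℝ) (u : ℂ → ℂ) (z : ℂ) : ℂ := (((1 + ‖z‖ ^ 2) ^ a : ℝ) : ℂ) * u z

noncomputable def integrand (u : ℂ → ℂ) (z w : ℂ) : ℂ := cexp (conj w * z - (‖w‖ : ℂ) ^ 2 / 2) * u w

/-- For `0 ≤ a`, `kernelBound a (z - w)` dominates `⟨z⟩^{2a} |K(z, w)| ⟨w⟩^{-2a}`. -/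
noncomputable def kernelBound (a : ℝ) (x : ℂ) : ℝ≥0∞ :=
  ENNReal.ofReal (2 ^ a / Real.pi * ((1 + ‖x‖ ^ 2) ^ a * Real.exp (-‖x‖ ^ 2 / 2)))

theorem measurable_kernelBound (a : ℝ) : Measurable (kernelBound a) := by
  unfold kernelBound; fun_prop

theorem lintegral_kernelBound_lt_top (a : ℝ) : ∫⁻ x, kernelBound a x < ∞ := by
  refine Integrable.lintegral_lt_top (Integrable.const_mul ?_ _)
  simpa [neg_div, div_eq_inv_mul] using
    integrable_one_add_norm_sq_rpow_mul_exp (V := ℂ) (a := a) (b := 1 / 2) (by norm_num)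

theorem exists_kernelBound_le (a : ℝ) : ∃ B : ℝ, ∀ x, kernelBound a x ≤ ENNReal.ofReal B := by
  obtain ⟨C, hC⟩ := exists_one_add_rpow_le_mul_exp (a := a) (half_pos one_pos)
  refine ⟨2 ^ a / Real.pi * C, fun x => ENNReal.ofReal_le_ofReal ?_⟩
  gcongr
  calc (1 + ‖x‖ ^ 2) ^ a * Real.exp (-‖x‖ ^ 2 / 2)
      ≤ C * Real.exp (1 / 2 * ‖x‖ ^ 2) * Real.exp (-‖x‖ ^ 2 / 2) := by
        gcongr; exact hC _ (sq_nonneg _)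
    _ = C := by rw [mul_assoc, ← Real.exp_add]; ring_nf; simp

theorem norm_cexp_kernel (z w : ℂ) :
    ‖cexp (conj w * z - (‖w‖ : ℂ) ^ 2 / 2)‖ = Real.exp (‖z‖ ^ 2 / 2 - ‖z - w‖ ^ 2 / 2) := by
  have hsq : ‖z - w‖ ^ 2 = ‖z‖ ^ 2 - 2 * (conj w * z).re + ‖w‖ ^ 2 := by
    simp only [Complex.sq_norm, Complex.normSq_apply, Complex.sub_re, Complex.sub_im,
      Complex.mul_re, Complex.conj_re, Complex.conj_im]
    ring
  rw [Complex.norm_exp, Complex.sub_re, ← Complex.ofReal_pow, ← Complex.ofReal_ofNat,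
    ← Complex.ofReal_div, Complex.ofReal_re, hsq]
  ring_nf

theorem weight_mul_norm_kernel_le {a : ℝ} (ha : 0 ≤ a) (z w : ℂ) :
    (1 + ‖z‖ ^ 2) ^ a * (Real.pi⁻¹ * Real.exp (-‖z‖ ^ 2 / 2)) *
        ‖cexp (conj w * z - (‖w‖ : ℂ) ^ 2 / 2)‖ ≤
      2 ^ a / Real.pi * ((1 + ‖z - w‖ ^ 2) ^ a * Real.exp (-‖z - w‖ ^ 2 / 2)) *
        (1 + ‖w‖ ^ 2) ^ a := by
  have peetre : (1 + ‖z‖ ^ 2) ^ a ≤ 2 ^ a * (1 + ‖z - w‖ ^ 2) ^ a * (1 + ‖w‖ ^ 2) ^ a := by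
    simpa using one_add_norm_add_sq_rpow_le ha (z - w) w
  calc (1 + ‖z‖ ^ 2) ^ a * (Real.pi⁻¹ * Real.exp (-‖z‖ ^ 2 / 2)) *
          ‖cexp (conj w * z - (‖w‖ : ℂ) ^ 2 / 2)‖
      = (1 + ‖z‖ ^ 2) ^ a * (Real.pi⁻¹ * Real.exp (-‖z - w‖ ^ 2 / 2)) := by
        rw [norm_cexp_kernel, mul_assoc, mul_assoc, ← Real.exp_add]; ring_nf
    _ ≤ 2 ^ a * (1 + ‖z - w‖ ^ 2) ^ a * (1 + ‖w‖ ^ 2) ^ a *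
          (Real.pi⁻¹ * Real.exp (-‖z - w‖ ^ 2 / 2)) := by gcongr
    _ = _ := by ring

theorem lintegral_weight_mul_enorm_integrand_le {a : ℝ} (ha : 0 ≤ a) (u : ℂ → ℂ) (z : ℂ) :
    ∫⁻ w, ENNReal.ofReal ((1 + ‖z‖ ^ 2) ^ a * (Real.pi⁻¹ * Real.exp (-‖z‖ ^ 2 / 2))) *
        ‖integrand u z w‖ₑ ≤ ((‖weighted a u ·‖ₑ) ⋆ₗ kernelBound a) z := by
  refine lintegral_mono fun w => ?_
  dsimp only
  have hw : ‖weighted a u w‖ = (1 + ‖w‖ ^ 2) ^ a * ‖u w‖ := by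
    rw [weighted, norm_mul, Complex.norm_real, Real.norm_of_nonneg (by positivity)]
  calc ENNReal.ofReal ((1 + ‖z‖ ^ 2) ^ a * (Real.pi⁻¹ * Real.exp (-‖z‖ ^ 2 / 2))) *
        ‖integrand u z w‖ₑ
      = ENNReal.ofReal ((1 + ‖z‖ ^ 2) ^ a * (Real.pi⁻¹ * Real.exp (-‖z‖ ^ 2 / 2)) *
          ‖cexp (conj w * z - (‖w‖ : ℂ) ^ 2 / 2)‖ * ‖u w‖) := by
        rw [integrand, ← ofReal_norm, ← ENNReal.ofReal_mul (by positivity), norm_mul, ← mul_assoc]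
    _ ≤ ENNReal.ofReal (‖weighted a u w‖ *
          (2 ^ a / Real.pi * ((1 + ‖z - w‖ ^ 2) ^ a * Real.exp (-‖z - w‖ ^ 2 / 2)))) := by
        refine ENNReal.ofReal_le_ofReal ?_
        rw [hw]
        have := weight_mul_norm_kernel_le ha z w
        calc _ ≤ 2 ^ a / Real.pi * ((1 + ‖z - w‖ ^ 2) ^ a * Real.exp (-‖z - w‖ ^ 2 / 2)) *
              (1 + ‖w‖ ^ 2) ^ a * ‖u w‖ := by gcongr
          _ = _ := by ring
    _ = ‖weighted a u w‖ₑ * kernelBound a (-w + z) := by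
        rw [ENNReal.ofReal_mul (norm_nonneg _), ofReal_norm, kernelBound, neg_add_eq_sub]

theorem norm_weighted_LLLProj {a : ℝ} (u : ℂ → ℂ) (z : ℂ) :
    ‖weighted a (LLLProj u) z‖ =
      (1 + ‖z‖ ^ 2) ^ a * (Real.pi⁻¹ * Real.exp (-‖z‖ ^ 2 / 2)) * ‖∫ w, integrand u z w‖ := by
  have hexp : -(‖z‖ : ℂ) ^ 2 / 2 = ((-‖z‖ ^ 2 / 2 : ℝ) : ℂ) := by push_cast; ring
  rw [weighted, LLLProj, hexp, norm_mul, norm_mul, norm_mul, norm_inv, Complex.norm_real,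
    Complex.norm_real, Complex.norm_exp_ofReal, Real.norm_of_nonneg (by positivity),
    Real.norm_of_nonneg Real.pi_pos.le, ← mul_assoc]
  rfl

theorem enorm_weighted_LLLProj_le {a : ℝ} (ha : 0 ≤ a) (u : ℂ → ℂ) (z : ℂ) :
    ‖weighted a (LLLProj u) z‖ₑ ≤ ((‖weighted a u ·‖ₑ) ⋆ₗ kernelBound a) z := by
  calc ‖weighted a (LLLProj u) z‖ₑ
      = ENNReal.ofReal ((1 + ‖z‖ ^ 2) ^ a * (Real.pi⁻¹ * Real.exp (-‖z‖ ^ 2 / 2))) *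
          ‖∫ w, integrand u z w‖ₑ := by
        rw [← ofReal_norm, norm_weighted_LLLProj, ENNReal.ofReal_mul (by positivity), ofReal_norm]
    _ ≤ ENNReal.ofReal ((1 + ‖z‖ ^ 2) ^ a * (Real.pi⁻¹ * Real.exp (-‖z‖ ^ 2 / 2))) *
          ∫⁻ w, ‖integrand u z w‖ₑ := by gcongr; exact enorm_integral_le_lintegral_enorm _
    _ = ∫⁻ w, ENNReal.ofReal ((1 + ‖z‖ ^ 2) ^ a * (Real.pi⁻¹ * Real.exp (-‖z‖ ^ 2 / 2))) *
          ‖integrand u z w‖ₑ := (lintegral_const_mul' _ _ ENNReal.ofReal_ne_top).symm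
    _ ≤ _ := lintegral_weight_mul_enorm_integrand_le ha u z

theorem integrable_integrand {a : ℝ} (ha : 0 ≤ a) {u : ℂ → ℂ} (hu : AEStronglyMeasurable u)
    {z : ℂ} (hz : ((‖weighted a u ·‖ₑ) ⋆ₗ kernelBound a) z < ∞) : Integrable (integrand u z) := by
  refine ⟨(by fun_prop : Continuous fun w : ℂ => cexp (conj w * z - (‖w‖ : ℂ) ^ 2 / 2))
    |>.aestronglyMeasurable.mul hu, ?_⟩
  have hc : ENNReal.ofReal ((1 + ‖z‖ ^ 2) ^ a * (Real.pi⁻¹ * Real.exp (-‖z‖ ^ 2 / 2))) ≠ 0 := by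
    have := Real.pi_pos
    positivity
  refine ENNReal.lt_top_of_mul_ne_top_right ?_ hc
  rw [← lintegral_const_mul' _ _ ENNReal.ofReal_ne_top]
  exact ((lintegral_weight_mul_enorm_integrand_le ha u z).trans_lt hz).ne

end LowestLandauLevel

open LowestLandauLevel

/-- The projector `Π` extends boundedly to the weighted spaces `L^{p,α}`:
for every measurable `u` with `‖⟨z⟩^α u‖_{L^p} < ∞`, the defining integral of `Πu`
converges absolutely at every point and `‖⟨z⟩^α Πu‖_{L^p} ≤ C ‖⟨z⟩^α u‖_{L^p}`. -/
theorem lll_proj_bounded_weighted (p : ENNReal) (hp : 1 ≤ p) (α : ℝ) (hα : 0 ≤ α) :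
    ∃ C : ℝ, 0 < C ∧ ∀ u : ℂ → ℂ,
      AEStronglyMeasurable u (volume : Measure ℂ) →
      eLpNorm (fun z : ℂ => (((1 + ‖z‖ ^ 2) ^ (α / 2) : ℝ) : ℂ) * u z) p volume < ⊤ →
      (∀ z : ℂ, Integrable
          (fun w : ℂ => Complex.exp ((starRingEnd ℂ) w * z - (‖w‖ : ℂ) ^ 2 / 2) * u w)
          (volume : Measure ℂ)) ∧
      eLpNorm (fun z : ℂ => (((1 + ‖z‖ ^ 2) ^ (α / 2) : ℝ) : ℂ) * LLLProj u z) p volume ≤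
        ENNReal.ofReal C *
          eLpNorm (fun z : ℂ => (((1 + ‖z‖ ^ 2) ^ (α / 2) : ℝ) : ℂ) * u z) p volume := by
  have ha : 0 ≤ α / 2 := by positivity
  obtain ⟨B, hMB⟩ := exists_kernelBound_le (α / 2)
  have hM := measurable_kernelBound (α / 2)
  have hM_int := lintegral_kernelBound_lt_top (α / 2)
  refine ⟨(∫⁻ x, kernelBound (α / 2) x).toReal + 1, by positivity, fun u hu hfin => ?_⟩
  have hv : AEMeasurable (‖weighted (α / 2) u ·‖ₑ) :=
    ((by fun_prop : Continuous fun z : ℂ => (((1 + ‖z‖ ^ 2) ^ (α / 2) : ℝ) : ℂ))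
      |>.aestronglyMeasurable.mul hu).enorm
  have hconv (z : ℂ) : ((‖weighted (α / 2) u ·‖ₑ) ⋆ₗ kernelBound (α / 2)) z < ⊤ :=
    lconvolution_lt_top hv hM hM_int.ne ENNReal.ofReal_ne_top hMB hp
      ((eLpNorm_enorm _).trans_lt hfin).ne z
  refine ⟨fun z => integrable_integrand ha hu (hconv z), ?_⟩
  calc eLpNorm (weighted (α / 2) (LLLProj u)) p volume
      ≤ eLpNorm ((‖weighted (α / 2) u ·‖ₑ) ⋆ₗ kernelBound (α / 2)) p volume :=
        eLpNorm_mono_enorm fun z => by simpa using enorm_weighted_LLLProj_le ha u z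
    _ ≤ (∫⁻ x, kernelBound (α / 2) x) * eLpNorm (weighted (α / 2) u) p volume := by
        simpa only [eLpNorm_enorm] using eLpNorm_lconvolution_le hv hM hp
    _ ≤ ENNReal.ofReal ((∫⁻ x, kernelBound (α / 2) x).toReal + 1) *
          eLpNorm (weighted (α / 2) u) p volume := by
        gcongr
        exact (ENNReal.le_ofReal_iff_toReal_le hM_int.ne (by positivity)).2 (by linarith)
end

section
/- For n ∈ ℕ and α ∈ ℂ, define φ_n^α(z) = (π n!)^{−1/2} (z − \overline{α})^n exp(−|z|²/2 − |α|²/2 + α z). Then ∫_ℂ |φ_n^α(z)|² dL(z) = 1, and for every z ∈ ℂ, Π(|φ_n^α|² φ_n^α)(z) = ((2n)!/(π (n!)² 2^{2n+1})) · φ_n^α(z). In particular φ_n^α is an M-stationary wave of the cubic lowest Landau level equation with λ = (2n)!/(π (n!)² 2^{2n+1}). -/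
open MeasureTheory

/-- The translated Hermite profile `φ_n^α(z) = (π n!)^{-1/2} (z-ᾱ)^n e^{-|z|²/2-|α|²/2+αz}`. -/
noncomputable def phiNA (n : ℕ) (α : ℂ) (z : ℂ) : ℂ :=
  ((Real.sqrt (Real.pi * n.factorial) : ℝ) : ℂ)⁻¹ * (z - (starRingEnd ℂ) α) ^ n *
    Complex.exp (-(‖z‖ : ℂ) ^ 2 / 2 - (‖α‖ : ℂ) ^ 2 / 2 + α * z)

/-!
Substituting `w = v + ᾱ` turns `φ_n^α(w)` into the unimodular phase `e^{i Im(αv)}` times the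
centred profile `φ_n^0(v) = (π n!)^{-1/2} v^n e^{-|v|²/2}`. Hence the mass is a Gaussian moment,
and the integral defining `Π(|φ_n^α|² φ_n^α)(z)` becomes, up to an explicit factor,
`∫ v^{2n} v̄^n e^{-2|v|²} e^{v̄ζ} dL(v)` with `ζ = z - ᾱ`. Expanding `e^{v̄ζ}` in powers of `v̄ζ`
(dominated convergence), the angular integral kills every term except `(v̄ζ)^n / n!`, which
leaves `ζ^n / n! · π (2n)! / 2^{2n+1}`.
-/

open Real Set
open scoped ComplexConjugate Nat

lemma integrable_norm_pow_mul_exp_neg_mul_sq (j : ℕ) {c : ℝ} (hc : 0 < c) :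
    Integrable fun v : ℂ => ‖v‖ ^ j * rexp (-c * ‖v‖ ^ 2) := by
  rw [integrable_fun_norm_addHaar volume (f := fun r => r ^ j * rexp (-c * r ^ 2)),
    Complex.finrank_real_complex]
  refine (integrableOn_rpow_mul_exp_neg_mul_sq hc (s := j + 1)
    (by linarith [j.cast_nonneg (α := ℝ)])).congr_fun (fun r hr => ?_) measurableSet_Ioi
  simp only [rpow_add hr, rpow_one, rpow_natCast, smul_eq_mul]
  ring

lemma integrable_norm_pow_mul_exp_neg_mul_sq_mul_exp (j : ℕ) {c : ℝ} (hc : 0 < c) (ρ : ℝ) :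
    Integrable fun v : ℂ => ‖v‖ ^ j * rexp (-c * ‖v‖ ^ 2) * rexp (ρ * ‖v‖) := by
  refine ((integrable_norm_pow_mul_exp_neg_mul_sq j (half_pos hc)).const_mul
    (rexp (ρ ^ 2 / (2 * c)))).mono' (by fun_prop) (.of_forall fun v => ?_)
  have h_square : ρ ^ 2 / (2 * c) + -(c / 2) * ‖v‖ ^ 2 - (-c * ‖v‖ ^ 2 + ρ * ‖v‖) =
      (c * ‖v‖ - ρ) ^ 2 / (2 * c) := by
    field_simp
    ring
  have h_exp : rexp (-c * ‖v‖ ^ 2) * rexp (ρ * ‖v‖) ≤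
      rexp (ρ ^ 2 / (2 * c)) * rexp (-(c / 2) * ‖v‖ ^ 2) := by
    rw [← Real.exp_add, ← Real.exp_add, Real.exp_le_exp]
    linarith [h_square, div_nonneg (sq_nonneg (c * ‖v‖ - ρ)) (by positivity : 0 ≤ 2 * c)]
  rw [Real.norm_of_nonneg (by positivity)]
  linear_combination mul_le_mul_of_nonneg_left h_exp (pow_nonneg (norm_nonneg v) j)

lemma integral_exp_int_mul_I_eq_zero {m : ℤ} (hm : m ≠ 0) :
    ∫ θ in Ioo (-π) π, Complex.exp (m * θ * Complex.I) = 0 := by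
  rw [← integral_Ioc_eq_integral_Ioo, ← intervalIntegral.integral_of_le (by linarith [pi_pos])]
  have hmI : (m : ℂ) * Complex.I ≠ 0 := by simp [hm]
  simp_rw [mul_right_comm _ _ Complex.I]
  rw [integral_exp_mul_complex hmI, div_eq_zero_iff, sub_eq_zero]
  left
  calc Complex.exp (m * Complex.I * π)
      = Complex.exp (m * Complex.I * (-π : ℝ) + m * (2 * π * Complex.I)) := by
        push_cast; ring_nf
    _ = _ := by rw [Complex.exp_add, Complex.exp_int_mul_two_pi_mul_I, mul_one]

lemma integral_Ioi_pow_mul_exp_neg_mul_sq (a : ℕ) {c : ℝ} (hc : 0 < c) :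
    ∫ r in Ioi (0 : ℝ), r ^ (2 * a + 1) * rexp (-c * r ^ 2) = a ! / (2 * c ^ (a + 1)) := by
  have h := integral_rpow_mul_exp_neg_mul_rpow (p := 2) (q := 2 * a + 1) (b := c) two_pos
    (by linarith [a.cast_nonneg (α := ℝ)]) hc
  rw [show ((2 * a + 1 : ℝ) + 1) / 2 = a + 1 by ring,
    show -((2 * a + 1 : ℝ) + 1) / 2 = -(a + 1) by ring, Real.Gamma_nat_eq_factorial,
    rpow_neg hc.le, show (a + 1 : ℝ) = (a + 1 : ℕ) by push_cast; ring, rpow_natCast] at h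
  calc ∫ r in Ioi (0 : ℝ), r ^ (2 * a + 1) * rexp (-c * r ^ 2)
      = ∫ r in Ioi (0 : ℝ), r ^ (2 * a + 1 : ℝ) * rexp (-c * r ^ (2 : ℝ)) := by
        norm_cast
    _ = a ! / (2 * c ^ (a + 1)) := by rw [h]; field_simp

lemma Complex.polarCoord_symm_eq_mul_exp (p : ℝ × ℝ) :
    Complex.polarCoord.symm p = p.1 * Complex.exp (p.2 * Complex.I) := by
  rw [Complex.polarCoord_symm_apply, Complex.exp_mul_I]
  push_cast
  ring

lemma integral_pow_mul_conj_pow_mul_exp_neg_mul_sq (a b : ℕ) {c : ℝ} (hc : 0 < c) :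
    ∫ v : ℂ, v ^ a * conj v ^ b * rexp (-c * ‖v‖ ^ 2) =
      if a = b then ((π * a ! / c ^ (a + 1) : ℝ) : ℂ) else 0 := by
  have h_polar : ∀ p ∈ Ioi (0 : ℝ) ×ˢ Ioo (-π) π,
      p.1 • ((Complex.polarCoord.symm p) ^ a * conj (Complex.polarCoord.symm p) ^ b *
        rexp (-c * ‖Complex.polarCoord.symm p‖ ^ 2)) =
      ((p.1 ^ (a + b + 1) * rexp (-c * p.1 ^ 2) : ℝ) : ℂ) *
        Complex.exp (((a : ℤ) - b : ℤ) * p.2 * Complex.I) := by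
    rintro ⟨r, θ⟩ ⟨hr, -⟩
    rw [Complex.norm_polarCoord_symm, abs_of_pos (show (0 : ℝ) < r from hr),
      Complex.polarCoord_symm_eq_mul_exp, map_mul, ← Complex.exp_conj, Complex.conj_ofReal,
      Complex.real_smul, mul_pow, mul_pow, ← Complex.exp_nat_mul, ← Complex.exp_nat_mul]
    simp only [map_mul, Complex.conj_ofReal, Complex.conj_I]
    rw [show ((((a : ℤ) - b : ℤ) : ℂ) * θ * Complex.I) =
      a * (θ * Complex.I) + b * (θ * -Complex.I) by push_cast; ring, Complex.exp_add]
    push_cast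
    ring
  rw [← Complex.integral_comp_polarCoord_symm, polarCoord_target,
    setIntegral_congr_fun (measurableSet_Ioi.prod measurableSet_Ioo) h_polar,
    Measure.volume_eq_prod,
    setIntegral_prod_mul (f := fun r : ℝ => ((r ^ (a + b + 1) * rexp (-c * r ^ 2) : ℝ) : ℂ))
      (g := fun θ : ℝ => Complex.exp (((a : ℤ) - b : ℤ) * θ * Complex.I))]
  split_ifs with hab
  · subst hab
    simp only [sub_self, Int.cast_zero, zero_mul, Complex.exp_zero, integral_complex_ofReal,
      ← two_mul, integral_Ioi_pow_mul_exp_neg_mul_sq a hc, setIntegral_const,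
      volume_real_Ioo_of_le (by linarith [pi_pos] : -π ≤ π), Complex.real_smul, mul_one]
    push_cast
    field_simp
    ring
  · rw [integral_exp_int_mul_I_eq_zero (sub_ne_zero.mpr (by exact_mod_cast hab)), mul_zero]

lemma integral_norm_pow_mul_exp_neg_mul_sq (a : ℕ) {c : ℝ} (hc : 0 < c) :
    ∫ v : ℂ, ‖v‖ ^ (2 * a) * rexp (-c * ‖v‖ ^ 2) = π * a ! / c ^ (a + 1) := by
  have h := integral_pow_mul_conj_pow_mul_exp_neg_mul_sq a a hc
  rw [if_pos rfl] at h
  apply Complex.ofReal_injective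
  rw [← h, ← integral_complex_ofReal]
  congr 1 with v
  rw [← mul_pow, Complex.mul_conj', pow_mul]
  push_cast
  rfl

lemma integral_pow_mul_conj_pow_mul_exp_neg_mul_sq_mul_exp_conj_mul (b k : ℕ) {c : ℝ}
    (hc : 0 < c) (ζ : ℂ) :
    ∫ v : ℂ, v ^ (b + k) * conj v ^ b * rexp (-c * ‖v‖ ^ 2) * Complex.exp (conj v * ζ) =
      ζ ^ k / k ! * ((π * (b + k) ! / c ^ (b + k + 1) : ℝ) : ℂ) := by
  have h_exp_series (x : ℝ) : HasSum (fun j => x ^ j / j !) (rexp x) :=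
    Real.exp_eq_exp_ℝ ▸ NormedSpace.expSeries_div_hasSum_exp x
  set F : ℕ → ℂ → ℂ := fun j v =>
    v ^ (b + k) * conj v ^ b * rexp (-c * ‖v‖ ^ 2) * ((conj v * ζ) ^ j / j !)
  set bound : ℕ → ℂ → ℝ := fun j v =>
    ‖v‖ ^ (2 * b + k) * rexp (-c * ‖v‖ ^ 2) * ((‖ζ‖ * ‖v‖) ^ j / j !)
  have h_norm (j : ℕ) (v : ℂ) : ‖F j v‖ = bound j v := by
    simp only [F, bound, norm_mul, norm_div, norm_pow, Complex.norm_conj, Complex.norm_real,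
      Complex.norm_natCast, Real.norm_of_nonneg (Real.exp_nonneg _)]
    ring
  have h_term (j : ℕ) : ∫ v, F j v =
      if j = k then ζ ^ k / k ! * ((π * (b + k) ! / c ^ (b + k + 1) : ℝ) : ℂ) else 0 := by
    calc ∫ v, F j v =
          ζ ^ j / j ! * ∫ v : ℂ, v ^ (b + k) * conj v ^ (b + j) * rexp (-c * ‖v‖ ^ 2) := by
          rw [← integral_const_mul]
          congr 1 with v
          ring
      _ = _ := by
          rw [integral_pow_mul_conj_pow_mul_exp_neg_mul_sq _ _ hc]
          rcases eq_or_ne j k with rfl | hjk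
          · simp
          · simp [hjk, hjk.symm]
  have h_sum := hasSum_integral_of_dominated_convergence bound (fun j => by fun_prop)
    (fun j => .of_forall fun v => (h_norm j v).le)
    (.of_forall fun v => ((h_exp_series _).mul_left _).summable)
    ((integrable_norm_pow_mul_exp_neg_mul_sq_mul_exp (2 * b + k) hc ‖ζ‖).congr
      (.of_forall fun v => ((h_exp_series _).mul_left _).tsum_eq.symm))
    (.of_forall fun v => (NormedSpace.expSeries_div_hasSum_exp (conj v * ζ)).mul_left _)
  simp_rw [← Complex.exp_eq_exp_ℂ, h_term] at h_sum
  exact h_sum.unique (hasSum_ite_eq k _)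

lemma Complex.ofReal_im_mul_I (z : ℂ) : (z.im : ℂ) * Complex.I = (z - conj z) / 2 := by
  rw [Complex.sub_conj]; push_cast; ring

lemma phiNA_add_conj (n : ℕ) (α v : ℂ) :
    phiNA n α (v + conj α) = Complex.exp ((α * v).im * Complex.I) * phiNA n 0 v := by
  simp only [phiNA, add_sub_cancel_right, map_zero, sub_zero, norm_zero, Complex.ofReal_zero,
    zero_mul, add_zero]
  rw [mul_left_comm, ← Complex.exp_add, Complex.ofReal_im_mul_I, map_mul, ← Complex.mul_conj', ← Complex.mul_conj',
    ← Complex.mul_conj', map_add, Complex.conj_conj]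
  ring_nf

lemma norm_phiNA_add_conj (n : ℕ) (α v : ℂ) : ‖phiNA n α (v + conj α)‖ = ‖phiNA n 0 v‖ := by
  rw [phiNA_add_conj, norm_mul, Complex.norm_exp_ofReal_mul_I, one_mul]

lemma norm_phiNA_zero_sq (n : ℕ) (v : ℂ) :
    ‖phiNA n 0 v‖ ^ 2 = (π * n !)⁻¹ * (‖v‖ ^ (2 * n) * rexp (-‖v‖ ^ 2)) := by
  simp only [phiNA, map_zero, sub_zero, norm_zero, Complex.ofReal_zero, zero_mul, add_zero,
    norm_mul, norm_inv, norm_pow, Complex.norm_real, Complex.norm_exp]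
  have h_re : (-(‖v‖ : ℂ) ^ 2 / 2 - 0 ^ 2 / 2).re = -‖v‖ ^ 2 / 2 := by
    simp [sq]
  rw [h_re, Real.norm_of_nonneg (Real.sqrt_nonneg _), mul_pow, mul_pow, inv_pow,
    Real.sq_sqrt (by positivity), ← pow_mul, ← Real.exp_nat_mul]
  ring_nf

lemma kernel_mul_cube_phiNA_add_conj (n : ℕ) (α z v : ℂ) :
    Complex.exp (conj (v + conj α) * z - (‖v + conj α‖ : ℂ) ^ 2 / 2) *
        ((‖phiNA n α (v + conj α)‖ : ℂ) ^ 2 * phiNA n α (v + conj α)) =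
      ((π : ℂ) * n !)⁻¹ * ((√(π * n !) : ℝ) : ℂ)⁻¹ * Complex.exp (α * z - (‖α‖ : ℂ) ^ 2 / 2) *
        (v ^ (n + n) * conj v ^ n * rexp (-2 * ‖v‖ ^ 2) * Complex.exp (conj v * (z - conj α))) := by
  have h_sq : (‖phiNA n 0 v‖ : ℂ) ^ 2 =
      ((π : ℂ) * n !)⁻¹ * ((v * conj v) ^ n * Complex.exp (-(v * conj v))) := by
    rw [← Complex.ofReal_pow, norm_phiNA_zero_sq, Complex.mul_conj', pow_mul]
    push_cast
    rfl
  have h_exp : Complex.exp (conj (v + conj α) * z - (v + conj α) * conj (v + conj α) / 2) *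
      Complex.exp (-(v * conj v)) * Complex.exp ((α * v - conj α * conj v) / 2) *
      Complex.exp (-(v * conj v) / 2) =
      Complex.exp (α * z - α * conj α / 2) * Complex.exp (-2 * (v * conj v)) *
      Complex.exp (conj v * (z - conj α)) := by
    simp only [← Complex.exp_add, map_add, Complex.conj_conj]
    ring_nf
  rw [norm_phiNA_add_conj, phiNA_add_conj, h_sq, Complex.ofReal_im_mul_I, map_mul]
  simp only [phiNA, map_zero, sub_zero, norm_zero, Complex.ofReal_zero, zero_mul, add_zero]
  push_cast
  simp only [← Complex.mul_conj', zero_pow two_ne_zero, zero_div, sub_zero]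
  linear_combination
    ((π : ℂ) * n !)⁻¹ * ((√(π * n !) : ℝ) : ℂ)⁻¹ * v ^ (n + n) * conj v ^ n * h_exp

/-- `φ_n^α` has unit mass and is an M-stationary wave of (LLL) with
`λ = (2n)!/(π (n!)² 2^{2n+1})`:  `Π(|φ_n^α|² φ_n^α) = λ φ_n^α`. -/
theorem phiNA_is_M_stationary (n : ℕ) (α : ℂ) :
    (∫ z : ℂ, ‖phiNA n α z‖ ^ 2) = 1 ∧
    ∀ z : ℂ, LLLProj (fun w : ℂ => (‖phiNA n α w‖ : ℂ) ^ 2 * phiNA n α w) z =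
      ((((2 * n).factorial : ℝ) / (Real.pi * (n.factorial : ℝ) ^ 2 * 2 ^ (2 * n + 1)) : ℝ) : ℂ) *
        phiNA n α z := by
  refine ⟨?_, fun z => ?_⟩
  · calc ∫ z : ℂ, ‖phiNA n α z‖ ^ 2 = ∫ v : ℂ, ‖phiNA n α (v + conj α)‖ ^ 2 :=
          (integral_add_right_eq_self _ _).symm
      _ = ∫ v : ℂ, (π * n !)⁻¹ * (‖v‖ ^ (2 * n) * rexp (-1 * ‖v‖ ^ 2)) := by
          simp_rw [norm_phiNA_add_conj, norm_phiNA_zero_sq, neg_one_mul]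
      _ = 1 := by
          rw [integral_const_mul, integral_norm_pow_mul_exp_neg_mul_sq n one_pos, one_pow]
          field_simp
  · have h_int : ∫ w : ℂ, Complex.exp (conj w * z - (‖w‖ : ℂ) ^ 2 / 2) *
          ((‖phiNA n α w‖ : ℂ) ^ 2 * phiNA n α w) =
        ((π : ℂ) * n !)⁻¹ * ((√(π * n !) : ℝ) : ℂ)⁻¹ * Complex.exp (α * z - (‖α‖ : ℂ) ^ 2 / 2) *
          ((z - conj α) ^ n / n ! * ((π * (n + n) ! / 2 ^ (n + n + 1) : ℝ) : ℂ)) := by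
      rw [← integral_add_right_eq_self _ (conj α)]
      simp_rw [kernel_mul_cube_phiNA_add_conj]
      rw [integral_const_mul,
        integral_pow_mul_conj_pow_mul_exp_neg_mul_sq_mul_exp_conj_mul n n two_pos]
    have h_exp : Complex.exp (-(‖z‖ : ℂ) ^ 2 / 2 - (‖α‖ : ℂ) ^ 2 / 2 + α * z) =
        Complex.exp (-(‖z‖ : ℂ) ^ 2 / 2) * Complex.exp (α * z - (‖α‖ : ℂ) ^ 2 / 2) := by
      rw [← Complex.exp_add]; ring_nf
    rw [LLLProj, h_int, phiNA, h_exp, ← two_mul]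
    push_cast
    field_simp
end
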